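/- If 𝐦 ∈ Λ_j for some j ∈ {1,…,N}, then there exists a multi-index 𝐧 ∈ 𝐍𝐑 with 𝐧·λ = 0 and 𝐦 = e^j + 𝐧 (so that 𝐧 ∈ Λ₀ ∪ {𝟎}). -/

import Mathlib

open scoped BigOperators

/-- The dot product 𝐦·λ = Σⱼ (m₊ⱼ − m₋ⱼ)λⱼ. -/
def mdot {N : ℕ} (lam : Fin N → ℝ) (m : (Fin N → ℕ) × (Fin N → ℕ)) : ℝ :=
  ∑ j, ((m.1 j : ℝ) - (m.2 j : ℝ)) * lam j

/-- The norm ‖𝐦‖ = Σⱼ (m₊ⱼ + m₋ⱼ). -/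
def mnorm {N : ℕ} (m : (Fin N → ℕ) × (Fin N → ℕ)) : ℕ :=
  ∑ j, (m.1 j + m.2 j)

/-- The relation 𝐧 ≺ 𝐦. -/
def prec {N : ℕ} (n m : (Fin N → ℕ) × (Fin N → ℕ)) : Prop :=
  (∀ j, n.1 j + n.2 j ≤ m.1 j + m.2 j) ∧ mnorm n < mnorm m

/-- The resonant set 𝐑 = {𝐦 : |𝐦·λ| > m}. -/
def Rset {N : ℕ} (lam : Fin N → ℝ) (mass : ℝ) : Set ((Fin N → ℕ) × (Fin N → ℕ)) :=
  {m | |mdot lam m| > mass}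

/-- The minimal resonant set 𝐑_min. -/
def Rmin {N : ℕ} (lam : Fin N → ℝ) (mass : ℝ) : Set ((Fin N → ℕ) × (Fin N → ℕ)) :=
  {m | m ∈ Rset lam mass ∧ ∀ n ∈ Rset lam mass, ¬ prec n m}

/-- The set 𝐈 = {𝐦 : ∃ 𝐧 ∈ 𝐑_min, 𝐧 ≺ 𝐦}. -/
def Iset {N : ℕ} (lam : Fin N → ℝ) (mass : ℝ) : Set ((Fin N → ℕ) × (Fin N → ℕ)) :=
  {m | ∃ n ∈ Rmin lam mass, prec n m}

/-- The non-resonant set 𝐍𝐑 = ℕ₀^{2N} ∖ (𝐑_min ∪ 𝐈). -/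
def NRset {N : ℕ} (lam : Fin N → ℝ) (mass : ℝ) : Set ((Fin N → ℕ) × (Fin N → ℕ)) :=
  (Rmin lam mass ∪ Iset lam mass)ᶜ

/-- The elementary multi-index e^j. -/
def eIdx {N : ℕ} (j : Fin N) : (Fin N → ℕ) × (Fin N → ℕ) :=
  (fun k => if k = j then 1 else 0, fun _ => 0)


/-!
A non-resonant multi-index has `‖𝐦‖ < 2M`: otherwise one of its two halves contains a
one-signed sub-multi-index of size `M`, whose frequency is at least `Mλ₁ ≥ m`, hence `> m` by
genericity, so `𝐦` would lie above a resonant (hence above a minimal resonant) multi-index.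
If `𝐦·λ = λⱼ`, then `𝐦 + (0, e_j)` has size at most `2M` and frequency `0`, so by the second
generic assumption its two halves agree, i.e. `𝐦 = (𝐦₋, 𝐦₋) + e^j`; finally `𝐍𝐑` is closed
under passing to `≺`-smaller multi-indices.
-/

open Finset

section MultiIndex

variable {N : ℕ}

lemma prec_trans {a b c : (Fin N → ℕ) × (Fin N → ℕ)} (hab : prec a b) (hbc : prec b c) :
    prec a c :=
  ⟨fun j => (hab.1 j).trans (hbc.1 j), hab.2.trans hbc.2⟩

lemma mnorm_add (a b : (Fin N → ℕ) × (Fin N → ℕ)) : mnorm (a + b) = mnorm a + mnorm b := by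
  simp only [mnorm, Prod.fst_add, Prod.snd_add, Pi.add_apply, ← sum_add_distrib]
  exact sum_congr rfl fun _ _ => by ring

lemma prec_self_add (n : (Fin N → ℕ) × (Fin N → ℕ)) {d : (Fin N → ℕ) × (Fin N → ℕ)}
    (hd : 0 < mnorm d) : prec n (n + d) :=
  ⟨fun j => by simp only [Prod.fst_add, Prod.snd_add, Pi.add_apply]; omega,
    by rw [mnorm_add]; omega⟩

lemma mnorm_swap (m : (Fin N → ℕ) × (Fin N → ℕ)) : mnorm m.swap = mnorm m := by
  simp only [mnorm, Prod.fst_swap, Prod.snd_swap, add_comm]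

lemma mnorm_fst (f : Fin N → ℕ) : mnorm (f, 0) = ∑ k, f k := by
  simp [mnorm]

lemma mnorm_eIdx (j : Fin N) : mnorm (eIdx j) = 1 := by
  simp [mnorm, eIdx]

variable (lam : Fin N → ℝ)

lemma mdot_add (a b : (Fin N → ℕ) × (Fin N → ℕ)) :
    mdot lam (a + b) = mdot lam a + mdot lam b := by
  simp only [mdot, Prod.fst_add, Prod.snd_add, Pi.add_apply, ← sum_add_distrib]
  exact sum_congr rfl fun _ _ => by push_cast; ring

lemma mdot_swap (m : (Fin N → ℕ) × (Fin N → ℕ)) : mdot lam m.swap = -mdot lam m := by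
  simp only [mdot, Prod.fst_swap, Prod.snd_swap, ← sum_neg_distrib]
  exact sum_congr rfl fun _ _ => by ring

lemma mdot_eIdx (j : Fin N) : mdot lam (eIdx j) = lam j := by
  simp [mdot, eIdx]

lemma mdot_diag (f : Fin N → ℕ) : mdot lam (f, f) = 0 := by
  simp [mdot]

lemma mdot_fst (f : Fin N → ℕ) : mdot lam (f, 0) = ∑ k, (f k : ℝ) * lam k := by
  simp [mdot]

end MultiIndex

section Resonance

variable {N : ℕ} {lam : Fin N → ℝ} {mass : ℝ}

lemma swap_mem_Rset {m : (Fin N → ℕ) × (Fin N → ℕ)} (hm : m ∈ Rset lam mass) :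
    m.swap ∈ Rset lam mass := by
  show |mdot lam m.swap| > mass
  rwa [mdot_swap, abs_neg]

lemma exists_mem_Rmin_of_mem_Rset {n : (Fin N → ℕ) × (Fin N → ℕ)} (hn : n ∈ Rset lam mass) :
    ∃ r ∈ Rmin lam mass, r = n ∨ prec r n := by
  induction hK : mnorm n using Nat.strong_induction_on generalizing n with
  | _ K ih =>
    by_cases hmin : ∃ n' ∈ Rset lam mass, prec n' n
    swap
    · exact ⟨n, ⟨hn, fun n' hn' hn'n => hmin ⟨n', hn', hn'n⟩⟩, Or.inl rfl⟩
    obtain ⟨n', hn', hn'n⟩ := hmin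
    obtain ⟨r, hr, rfl | hrn'⟩ := ih _ (hK ▸ hn'n.2) hn' rfl
    · exact ⟨r, hr, Or.inr hn'n⟩
    · exact ⟨r, hr, Or.inr (prec_trans hrn' hn'n)⟩

lemma notMem_NRset_of_prec {r m : (Fin N → ℕ) × (Fin N → ℕ)} (hr : r ∈ Rset lam mass)
    (hrm : prec r m) : m ∉ NRset lam mass := by
  obtain ⟨s, hs, rfl | hsr⟩ := exists_mem_Rmin_of_mem_Rset hr
  · exact fun hm => hm (Or.inr ⟨s, hs, hrm⟩)
  · exact fun hm => hm (Or.inr ⟨s, hs, prec_trans hsr hrm⟩)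

lemma mem_NRset_of_prec {n m : (Fin N → ℕ) × (Fin N → ℕ)} (hnm : prec n m)
    (hm : m ∈ NRset lam mass) : n ∈ NRset lam mass := by
  rintro (hn | ⟨r, hr, hrn⟩)
  · exact hm (Or.inr ⟨n, hn, hnm⟩)
  · exact hm (Or.inr ⟨r, hr, prec_trans hrn hnm⟩)

end Resonance

lemma exists_le_sum_eq {ι : Type*} [Fintype ι] {g : ι → ℕ} {M : ℕ} (h : M ≤ ∑ k, g k) :
    ∃ f : ι → ℕ, f ≤ g ∧ ∑ k, f k = M := by
  classical
  induction M with
  | zero => exact ⟨0, fun k => Nat.zero_le _, by simp⟩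
  | succ M ih =>
    obtain ⟨f, hfg, hsum⟩ := ih (Nat.le_of_succ_le h)
    obtain ⟨k, hk⟩ : ∃ k, f k < g k := by
      by_contra! hgf
      have := sum_le_sum fun k (_ : k ∈ univ) => hgf k
      omega
    refine ⟨f + Pi.single k 1, fun i => ?_, by simp [sum_add_distrib, hsum]⟩
    rcases eq_or_ne i k with rfl | hik
    · simpa using hk
    · simpa [hik] using hfg i

section Threshold

variable {N : ℕ} (hN : 0 < N) {lam : Fin N → ℝ} {mass : ℝ} {M : ℕ}

lemma mul_lam_zero_le_sum (hmono : Monotone lam) {f : Fin N → ℕ} :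
    (∑ k, f k : ℕ) * lam ⟨0, hN⟩ ≤ ∑ k, (f k : ℝ) * lam k := by
  push_cast
  rw [sum_mul]
  exact sum_le_sum fun k _ =>
    mul_le_mul_of_nonneg_left (hmono (Fin.mk_le_of_le_val (Nat.zero_le _))) (by positivity)

lemma fst_mem_Rset_of_sum_eq (hmono : Monotone lam) (hM2 : mass ≤ (M : ℝ) * lam ⟨0, hN⟩)
    (hgen : ∀ m : (Fin N → ℕ) × (Fin N → ℕ), mnorm m ≤ M → (mdot lam m) ^ 2 ≠ mass ^ 2)
    {f : Fin N → ℕ} (hf : ∑ k, f k = M) : (f, 0) ∈ Rset lam mass := by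
  have hle : mass ≤ |mdot lam (f, 0)| := by
    rw [mdot_fst]
    exact (hM2.trans (hf ▸ mul_lam_zero_le_sum hN hmono)).trans (le_abs_self _)
  have hne : |mdot lam (f, 0)| ≠ mass := fun h =>
    hgen _ (mnorm_fst f ▸ hf).le (by rw [← sq_abs, h])
  exact lt_of_le_of_ne hle hne.symm

lemma mnorm_lt_of_mem_NRset (hmass : 0 < mass) (hmono : Monotone lam)
    (hM2 : mass ≤ (M : ℝ) * lam ⟨0, hN⟩)
    (hgen : ∀ m : (Fin N → ℕ) × (Fin N → ℕ), mnorm m ≤ M → (mdot lam m) ^ 2 ≠ mass ^ 2)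
    {m : (Fin N → ℕ) × (Fin N → ℕ)} (hm : m ∈ NRset lam mass) : mnorm m < 2 * M := by
  by_contra! hmM
  have hM : 0 < M := by
    by_contra! hM0
    have : (M : ℝ) = 0 := by exact_mod_cast Nat.le_zero.mp hM0
    linarith [this ▸ hM2]
  have hsplit : mnorm m = ∑ k, m.1 k + ∑ k, m.2 k := sum_add_distrib
  rcases le_or_gt M (∑ k, m.1 k) with h | h
  · obtain ⟨f, hfm, hf⟩ := exists_le_sum_eq h
    refine notMem_NRset_of_prec (fst_mem_Rset_of_sum_eq hN hmono hM2 hgen hf)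
      ⟨fun k => ?_, ?_⟩ hm
    · simpa using (hfm k).trans (Nat.le_add_right _ _)
    · rw [mnorm_fst, hf]; omega
  · obtain ⟨f, hfm, hf⟩ := exists_le_sum_eq (M := M) (g := m.2) (by omega)
    refine notMem_NRset_of_prec (swap_mem_Rset (fst_mem_Rset_of_sum_eq hN hmono hM2 hgen hf))
      ⟨fun k => ?_, ?_⟩ hm
    · simpa using (hfm k).trans (Nat.le_add_left _ _)
    · rw [mnorm_swap, mnorm_fst, hf]; omega

end Threshold

theorem mem_Lambda_decomp_general {N : ℕ} (hN : 0 < N) (lam : Fin N → ℝ) (mass : ℝ)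
    (hmass : 0 < mass)
    (hmono : StrictMono lam)
    (M : ℕ)
    (hM2 : mass ≤ (M : ℝ) * lam ⟨0, hN⟩)
    (hgen : ∀ m : (Fin N → ℕ) × (Fin N → ℕ), mnorm m ≤ M → (mdot lam m) ^ 2 ≠ mass ^ 2)
    (hgen2 : ∀ m : (Fin N → ℕ) × (Fin N → ℕ),
      mnorm m ≤ 2 * M → mdot lam m = 0 → m.1 = m.2)
    (j : Fin N) (m : (Fin N → ℕ) × (Fin N → ℕ))
    (hmNR : m ∈ NRset lam mass) (hmdot : mdot lam m = lam j) :
    ∃ n : (Fin N → ℕ) × (Fin N → ℕ), n ∈ NRset lam mass ∧ mdot lam n = 0 ∧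
      m.1 = (eIdx j).1 + n.1 ∧ m.2 = n.2 := by
  have hbound := mnorm_lt_of_mem_NRset hN hmass hmono.monotone hM2 hgen hmNR
  have hhalves : m.1 = m.2 + (eIdx j).1 :=
    hgen2 (m + (eIdx j).swap)
      (by rw [mnorm_add, mnorm_swap, mnorm_eIdx]; omega)
      (by rw [mdot_add, mdot_swap, mdot_eIdx, hmdot, add_neg_cancel])
  have hm : m = (m.2, m.2) + eIdx j := Prod.ext hhalves (funext fun _ => by simp [eIdx])
  have hprec : prec (m.2, m.2) m := hm ▸ prec_self_add _ (by rw [mnorm_eIdx]; exact one_pos)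
  exact ⟨(m.2, m.2), mem_NRset_of_prec hprec hmNR, mdot_diag lam m.2,
    by rw [hhalves, add_comm], rfl⟩

/-- If 𝐦 ∈ Λⱼ, then 𝐦 = e^j + 𝐧 for some 𝐧 ∈ 𝐍𝐑 with 𝐧·λ = 0. -/
theorem mem_Lambda_decomp {N : ℕ} (hN : 0 < N) (lam : Fin N → ℝ) (mass : ℝ)
    (hmass : 0 < mass)
    (hpos : ∀ j, 0 < lam j)
    (hmono : StrictMono lam)
    (hlt : ∀ j, lam j < mass)
    (M : ℕ)
    (hM1 : ((M : ℝ) - 1) * lam ⟨0, hN⟩ < mass)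
    (hM2 : mass ≤ (M : ℝ) * lam ⟨0, hN⟩)
    (hgen : ∀ m : (Fin N → ℕ) × (Fin N → ℕ), mnorm m ≤ M → (mdot lam m) ^ 2 ≠ mass ^ 2)
    (hgen2 : ∀ m : (Fin N → ℕ) × (Fin N → ℕ),
      mnorm m ≤ 2 * M → mdot lam m = 0 → m.1 = m.2)
    (j : Fin N) (m : (Fin N → ℕ) × (Fin N → ℕ))
    (hmNR : m ∈ NRset lam mass) (hmdot : mdot lam m = lam j) :
    ∃ n : (Fin N → ℕ) × (Fin N → ℕ), n ∈ NRset lam mass ∧ mdot lam n = 0 ∧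
      m.1 = (eIdx j).1 + n.1 ∧ m.2 = n.2 :=
  mem_Lambda_decomp_general hN lam mass hmass hmono M hM2 hgen hgen2 j m hmNR hmdot
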